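/- Let y₁, y₂ ∈ ℝ and let θ* be a critical point of the quartic objective E with E''(θ*) > 0. If y₁ ≤ θ*², then for every α ≥ 0 the point θ* is a strict local minimum point of the α-expanded objective E_α; in particular, the RE constant of θ* equals ∞. -/

import Mathlib

/-!
Writing `d = θ - θs` and `r = y₁ - θs²`, the α-expanded objective satisfies the exact expansion
`E_α(θ) - E_α(θs) = (1 + α) d E'(θs) + ½ d² (1 + (θ + θs)² - 2 (1 + α) r)`.
At a critical point the linear term vanishes, and `r ≤ 0` makes the quadratic coefficient at
least `1`, so `θs` is a strict global minimum of `E_α` for every `α ≥ -1`. The set defining the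
RE constant then contains all of `[0, ∞)`, so its supremum is `∞`.
-/

open Filter Topology
open scoped ENNReal

/-- The quartic least-squares objective `E(θ) = ½((y₁ − θ²)² + (y₂ − θ)²)`. -/
noncomputable def quarticE (y₁ y₂ : ℝ) (θ : ℝ) : ℝ :=
  (1 / 2) * ((y₁ - θ ^ 2) ^ 2 + (y₂ - θ) ^ 2)

/-- The `α`-expanded quartic objective at the point `θs`. -/
noncomputable def quarticEexp (y₁ y₂ θs α : ℝ) (θ : ℝ) : ℝ :=
  (1 / 2) * (((y₁ + α * (y₁ - θs ^ 2)) - θ ^ 2) ^ 2 + ((y₂ + α * (y₂ - θs)) - θ) ^ 2)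

/-- The RE constant of `θs`: `sup {α ≥ 0 : θs is a local minimum point of E_α}`,
as an element of `[0, ∞]`. -/
noncomputable def reConst (y₁ y₂ θs : ℝ) : ℝ≥0∞ :=
  sSup (ENNReal.ofReal '' {α : ℝ | 0 ≤ α ∧ IsLocalMin (quarticEexp y₁ y₂ θs α) θs})

theorem ENNReal.sSup_ofReal_image_eq_top {s : Set ℝ} (hs : ¬BddAbove s) :
    sSup (ENNReal.ofReal '' s) = ⊤ := by
  refine sSup_eq_top.2 fun b hb => ?_
  obtain ⟨a, has, hba⟩ := not_bddAbove_iff.1 hs b.toReal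
  exact ⟨ENNReal.ofReal a, Set.mem_image_of_mem _ has,
    (ENNReal.lt_ofReal_iff_toReal_lt hb.ne).2 hba⟩

section Quartic

variable {y₁ y₂ θs α : ℝ}

theorem hasDerivAt_quarticE (y₁ y₂ θ : ℝ) :
    HasDerivAt (quarticE y₁ y₂) (-(2 * θ) * (y₁ - θ ^ 2) - (y₂ - θ)) θ := by
  have h₁ : HasDerivAt (fun θ : ℝ => y₁ - θ ^ 2) (-(2 * θ)) θ := by
    simpa using (hasDerivAt_pow 2 θ).const_sub y₁
  have h₂ : HasDerivAt (fun θ : ℝ => y₂ - θ) (-1) θ := by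
    simpa using (hasDerivAt_id θ).const_sub y₂
  refine (((h₁.pow 2).add (h₂.pow 2)).const_mul (1 / 2 : ℝ)).congr_deriv ?_
  ring

theorem quarticEexp_sub_quarticEexp (y₁ y₂ θs α θ : ℝ) :
    quarticEexp y₁ y₂ θs α θ - quarticEexp y₁ y₂ θs α θs =
      (1 + α) * (θ - θs) * deriv (quarticE y₁ y₂) θs +
        (1 / 2) * (θ - θs) ^ 2 * (1 + (θ + θs) ^ 2 - 2 * (1 + α) * (y₁ - θs ^ 2)) := by
  rw [(hasDerivAt_quarticE y₁ y₂ θs).deriv, quarticEexp, quarticEexp]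
  ring

theorem quarticEexp_lt_of_deriv_eq_zero (hcrit : deriv (quarticE y₁ y₂) θs = 0)
    (hy₁ : y₁ ≤ θs ^ 2) (hα : -1 ≤ α) {θ : ℝ} (hθ : θ ≠ θs) :
    quarticEexp y₁ y₂ θs α θs < quarticEexp y₁ y₂ θs α θ := by
  have hd : 0 < (θ - θs) ^ 2 := sq_pos_of_ne_zero (sub_ne_zero.2 hθ)
  have hcoef : 0 < 1 + (θ + θs) ^ 2 - 2 * (1 + α) * (y₁ - θs ^ 2) := by
    have hr : 0 ≤ (1 + α) * (θs ^ 2 - y₁) := mul_nonneg (by linarith) (sub_nonneg.2 hy₁)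
    linarith [sq_nonneg (θ + θs)]
  have hexp := quarticEexp_sub_quarticEexp y₁ y₂ θs α θ
  rw [hcrit, mul_zero, zero_add] at hexp
  linarith [mul_pos (mul_pos one_half_pos hd) hcoef]

theorem isMinOn_quarticEexp_of_deriv_eq_zero (hcrit : deriv (quarticE y₁ y₂) θs = 0)
    (hy₁ : y₁ ≤ θs ^ 2) (hα : -1 ≤ α) :
    IsMinOn (quarticEexp y₁ y₂ θs α) Set.univ θs := by
  refine isMinOn_univ_iff.2 fun θ => ?_
  rcases eq_or_ne θ θs with rfl | hθ
  · exact le_rfl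
  · exact (quarticEexp_lt_of_deriv_eq_zero hcrit hy₁ hα hθ).le

end Quartic

theorem stmt_7_general (y₁ y₂ θs : ℝ)
    (hcrit : deriv (quarticE y₁ y₂) θs = 0)
    (hy₁ : y₁ ≤ θs ^ 2) :
    (∀ α : ℝ, 0 ≤ α →
      ∀ᶠ θ in 𝓝[≠] θs, quarticEexp y₁ y₂ θs α θs < quarticEexp y₁ y₂ θs α θ) ∧
    reConst y₁ y₂ θs = ⊤ := by
  refine ⟨fun α hα => eventually_nhdsWithin_of_forall fun θ hθ =>
    quarticEexp_lt_of_deriv_eq_zero hcrit hy₁ (by linarith) hθ, ?_⟩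
  have hsub : Set.Ici 0 ⊆ {α : ℝ | 0 ≤ α ∧ IsLocalMin (quarticEexp y₁ y₂ θs α) θs} :=
    fun α (hα : 0 ≤ α) => ⟨hα, (isMinOn_quarticEexp_of_deriv_eq_zero hcrit hy₁
      (by linarith)).isLocalMin univ_mem⟩
  exact ENNReal.sSup_ofReal_image_eq_top fun hbdd => not_bddAbove_Ici 0 (hbdd.mono hsub)

theorem stmt_7 (y₁ y₂ θs : ℝ)
    (hcrit : deriv (quarticE y₁ y₂) θs = 0)
    (hpos : 0 < iteratedDeriv 2 (quarticE y₁ y₂) θs)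
    (hy₁ : y₁ ≤ θs ^ 2) :
    (∀ α : ℝ, 0 ≤ α →
      ∀ᶠ θ in 𝓝[≠] θs, quarticEexp y₁ y₂ θs α θs < quarticEexp y₁ y₂ θs α θ) ∧
    reConst y₁ y₂ θs = ⊤ :=
  stmt_7_general y₁ y₂ θs hcrit hy₁
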